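/- Suppose f is locally univalent meromorphic on 𝔻 with Sf(z) = (1−z²)^{−2}. Then Vf(z) = 8i·Im(z) / [(1−|z|²)(1−z²)³] and ‖Vf‖₃ = sup_{z∈𝔻}(1−|z|²)³|Vf(z)| = 8√3/9. -/

import Mathlib

open Complex Metric Set

/-- The Schwarzian derivative `Sf = f'''/f' - (3/2)(f''/f')²`. -/
noncomputable def schwarzian (f : ℂ → ℂ) (z : ℂ) : ℂ :=
  deriv (deriv (deriv f)) z / deriv f z - (3 / 2) * (deriv (deriv f) z / deriv f z) ^ 2

/-- `Vf(z) = (Sf)'(z) - 4 z̄ (1 - |z|²)⁻¹ Sf(z)`. -/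
noncomputable def projSchwarzian (f : ℂ → ℂ) (z : ℂ) : ℂ :=
  deriv (schwarzian f) z
    - 4 * (starRingEnd ℂ) z / (1 - ((‖z‖ : ℝ) : ℂ) ^ 2) * schwarzian f z

/-!
Since `Sf = (1 - z²)⁻²` on the disc, `(Sf)' = 4z/(1 - z²)³` there, and the two terms of `Vf`
combine through `z(1 - |z|²) - z̄(1 - z²) = z - z̄ = 2i Im z`. Writing `u = 1 - |z|²` and
`m = |Im z|`, one has `|1 - z²|² = u² + 4m²`, so the weighted norm is `8mu²/(u² + 4m²)^{3/2}`;
AM-GM in the form `27 m²u⁴ ≤ (u² + 4m²)³` bounds it by `8√3/9`, with equality when `u² = 8m²`.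
-/

open ComplexConjugate

lemma one_sub_sq_ne_zero_of_norm_lt_one {z : ℂ} (hz : ‖z‖ < 1) : 1 - z ^ 2 ≠ 0 := by
  rw [sub_ne_zero, ne_comm]
  intro h
  have h1 := congrArg norm h
  rw [norm_pow, norm_one, pow_eq_one_iff_of_nonneg (norm_nonneg z) two_ne_zero] at h1
  exact hz.ne h1

lemma hasDerivAt_inv_one_sub_sq_sq {z : ℂ} (hz : 1 - z ^ 2 ≠ 0) :
    HasDerivAt (fun w : ℂ => ((1 - w ^ 2) ^ 2)⁻¹) (4 * z / (1 - z ^ 2) ^ 3) z := by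
  refine ((((hasDerivAt_pow 2 z).const_sub 1).pow 2).inv (pow_ne_zero 2 hz)).congr_deriv ?_
  simp only [Pi.pow_apply]
  field_simp
  ring

lemma norm_one_sub_sq_sq (z : ℂ) : ‖1 - z ^ 2‖ ^ 2 = (1 - ‖z‖ ^ 2) ^ 2 + 4 * z.im ^ 2 := by
  rw [← Complex.normSq_eq_norm_sq, ← Complex.normSq_eq_norm_sq]
  simp only [normSq_apply, pow_two, sub_re, sub_im, one_re, one_im, mul_re, mul_im]
  ring

-- `(u² + 4m²)³ - 27m²u⁴ = (8m² - u²)²(m² + u²)`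
lemma sq_mul_sq_le_cube (u m : ℝ) : 27 * (m * u ^ 2) ^ 2 ≤ (u ^ 2 + 4 * m ^ 2) ^ 3 := by
  nlinarith [mul_nonneg (sq_nonneg (8 * m ^ 2 - u ^ 2)) (add_nonneg (sq_nonneg m) (sq_nonneg u))]

lemma mul_sq_div_cube_le {u m w : ℝ} (hm : 0 ≤ m) (hw : 0 < w)
    (hw2 : w ^ 2 = u ^ 2 + 4 * m ^ 2) : 8 * m * u ^ 2 / w ^ 3 ≤ 8 * √3 / 9 := by
  have key : 9 * m * u ^ 2 ≤ √3 * w ^ 3 := by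
    rw [← pow_le_pow_iff_left₀ (by positivity) (by positivity) two_ne_zero]
    calc (9 * m * u ^ 2) ^ 2 = 3 * (27 * (m * u ^ 2) ^ 2) := by ring
      _ ≤ 3 * (u ^ 2 + 4 * m ^ 2) ^ 3 := by gcongr; exact sq_mul_sq_le_cube u m
      _ = (√3 * w ^ 3) ^ 2 := by
        rw [mul_pow, Real.sq_sqrt zero_le_three, ← hw2]
        ring
  rw [div_le_div_iff₀ (by positivity) (by norm_num)]
  linarith

lemma mul_sq_div_cube_eq {u m w : ℝ} (hm : 0 < m) (hu : u ^ 2 = 8 * m ^ 2) (hw : 0 < w)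
    (hw2 : w ^ 2 = u ^ 2 + 4 * m ^ 2) : 8 * m * u ^ 2 / w ^ 3 = 8 * √3 / 9 := by
  have hs : √3 ^ 2 = 3 := Real.sq_sqrt zero_le_three
  have hw' : w = 2 * √3 * m := by
    rw [← pow_left_inj₀ hw.le (by positivity) two_ne_zero, hw2, hu]
    linear_combination (-4 * m ^ 2) * hs
  rw [hw', hu, div_eq_div_iff (by positivity) (by norm_num)]
  linear_combination (-64 * m ^ 3 * (√3 ^ 2 + 3)) * hs

lemma projSchwarzian_eq_of_schwarzian_eq {f : ℂ → ℂ}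
    (hS : ∀ z ∈ ball (0 : ℂ) 1, schwarzian f z = ((1 - z ^ 2) ^ 2)⁻¹) {z : ℂ}
    (hz : z ∈ ball (0 : ℂ) 1) :
    projSchwarzian f z =
      8 * I * (z.im : ℂ) / ((1 - ((‖z‖ : ℝ) : ℂ) ^ 2) * (1 - z ^ 2) ^ 3) := by
  have hz1 : ‖z‖ < 1 := mem_ball_zero_iff.mp hz
  have hderiv : deriv (schwarzian f) z = 4 * z / (1 - z ^ 2) ^ 3 := by
    rw [(Filter.eventuallyEq_of_mem (isOpen_ball.mem_nhds hz) hS).deriv_eq,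
      (hasDerivAt_inv_one_sub_sq_sq (one_sub_sq_ne_zero_of_norm_lt_one hz1)).deriv]
  have hnorm : ((‖z‖ : ℝ) : ℂ) ^ 2 = z * conj z := by
    rw [mul_conj, normSq_eq_norm_sq, ofReal_pow]
  have hconj : 1 - z * conj z ≠ 0 := by
    rw [← hnorm, ← ofReal_pow, ← ofReal_one, ← ofReal_sub, ofReal_ne_zero]
    nlinarith [norm_nonneg z]
  have him : (z.im : ℂ) = (z - conj z) / (2 * I) := by
    rw [sub_conj]
    push_cast
    field_simp
  have hsq := one_sub_sq_ne_zero_of_norm_lt_one hz1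
  rw [projSchwarzian, hderiv, hS z hz, hnorm, him]
  field_simp
  ring

noncomputable def imWeight (z : ℂ) : ℝ :=
  8 * |z.im| * (1 - ‖z‖ ^ 2) ^ 2 / ‖1 - z ^ 2‖ ^ 3

lemma weighted_norm_eq_imWeight {z : ℂ} (hz : ‖z‖ < 1) :
    (1 - ‖z‖ ^ 2) ^ 3 *
        ‖8 * I * (z.im : ℂ) / ((1 - ((‖z‖ : ℝ) : ℂ) ^ 2) * (1 - z ^ 2) ^ 3)‖ =
      imWeight z := by
  have hu : 0 < 1 - ‖z‖ ^ 2 := by nlinarith [norm_nonneg z]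
  have hw : 0 < ‖1 - z ^ 2‖ := norm_pos_iff.mpr (one_sub_sq_ne_zero_of_norm_lt_one hz)
  rw [show (1 : ℂ) - ((‖z‖ : ℝ) : ℂ) ^ 2 = ((1 - ‖z‖ ^ 2 : ℝ) : ℂ) by push_cast; ring]
  simp only [norm_div, norm_mul, norm_pow, norm_I, norm_real, Real.norm_eq_abs,
    abs_of_pos hu, RCLike.norm_ofNat]
  rw [imWeight]
  field_simp

lemma imWeight_le {z : ℂ} (hz : ‖z‖ < 1) : imWeight z ≤ 8 * √3 / 9 :=
  mul_sq_div_cube_le (abs_nonneg _)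
    (norm_pos_iff.mpr (one_sub_sq_ne_zero_of_norm_lt_one hz))
    (by rw [norm_one_sub_sq_sq, sq_abs])

-- On the imaginary axis `u² = 8m²` reads `1 - a² = 2√2 a`, whose root in `(0, 1)` is `√3 - √2`.
lemma exists_imWeight_eq : ∃ z : ℂ, ‖z‖ < 1 ∧ imWeight z = 8 * √3 / 9 := by
  have hs : √2 ^ 2 = 2 := Real.sq_sqrt zero_le_two
  have ht : √3 ^ 2 = 3 := Real.sq_sqrt zero_le_three
  have hst : (√2 * √3) ^ 2 = 6 := by rw [mul_pow, hs, ht]; norm_num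
  set a := √3 - √2
  have ha : 0 < a := sub_pos.mpr (Real.sqrt_lt_sqrt zero_le_two (by norm_num))
  have ha1 : a < 1 := by nlinarith [Real.sqrt_pos.mpr zero_lt_two, Real.sqrt_nonneg 3]
  have ha2 : a ^ 2 = 5 - 2 * (√2 * √3) := by linear_combination ht + hs
  have hnorm : ‖(a : ℂ) * I‖ = a := by
    rw [norm_mul, norm_I, norm_real, Real.norm_eq_abs, abs_of_pos ha, mul_one]
  have him : ((a : ℂ) * I).im = a := by simp
  have hz : ‖(a : ℂ) * I‖ < 1 := by rwa [hnorm]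
  refine ⟨a * I, hz, mul_sq_div_cube_eq (by rwa [him, abs_of_pos ha]) ?_
    (norm_pos_iff.mpr (one_sub_sq_ne_zero_of_norm_lt_one hz)) ?_⟩
  · rw [hnorm, him, sq_abs]
    linear_combination (a ^ 2 - 5 - 2 * (√2 * √3)) * ha2 + 4 * hst
  · rw [norm_one_sub_sq_sq, sq_abs]

theorem projSchwarzian_of_special_schwarzian_general (f : ℂ → ℂ)
    (hS : ∀ z ∈ ball (0 : ℂ) 1, schwarzian f z = ((1 - z ^ 2) ^ 2)⁻¹) :
    (∀ z ∈ ball (0 : ℂ) 1,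
      projSchwarzian f z =
        8 * Complex.I * (z.im : ℂ) /
          ((1 - ((‖z‖ : ℝ) : ℂ) ^ 2) * (1 - z ^ 2) ^ 3)) ∧
    (⨆ z : ball (0 : ℂ) 1,
        (1 - ‖(z : ℂ)‖ ^ 2) ^ 3 * ‖projSchwarzian f z‖)
      = 8 * Real.sqrt 3 / 9 := by
  have hV := fun z (hz : z ∈ ball (0 : ℂ) 1) => projSchwarzian_eq_of_schwarzian_eq hS hz
  have hweight : ∀ z : ball (0 : ℂ) 1, (1 - ‖(z : ℂ)‖ ^ 2) ^ 3 * ‖projSchwarzian f z‖ =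
      imWeight z := fun z => by
    rw [hV z z.2, weighted_norm_eq_imWeight (mem_ball_zero_iff.mp z.2)]
  refine ⟨hV, ?_⟩
  rw [iSup_congr hweight]
  obtain ⟨z₀, hz₀, hmax⟩ := exists_imWeight_eq
  have hbound := fun z : ball (0 : ℂ) 1 => imWeight_le (mem_ball_zero_iff.mp z.2)
  refine le_antisymm (ciSup_le hbound) ?_
  rw [← hmax]
  exact le_ciSup ⟨_, forall_mem_range.mpr hbound⟩ ⟨z₀, mem_ball_zero_iff.mpr hz₀⟩

/-- If `Sf(z) = (1-z²)⁻²` on `𝔻`, then `Vf(z) = 8 i Im z / [(1-|z|²)(1-z²)³]`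
and `‖Vf‖₃ = 8√3/9`. -/
theorem projSchwarzian_of_special_schwarzian (f : ℂ → ℂ)
    (hf : MeromorphicOn f (ball (0 : ℂ) 1))
    (hloc : ∀ z ∈ ball (0 : ℂ) 1, ∃ U ∈ nhds z, Set.InjOn f U)
    (hS : ∀ z ∈ ball (0 : ℂ) 1, schwarzian f z = ((1 - z ^ 2) ^ 2)⁻¹) :
    (∀ z ∈ ball (0 : ℂ) 1,
      projSchwarzian f z =
        8 * Complex.I * (z.im : ℂ) /
          ((1 - ((‖z‖ : ℝ) : ℂ) ^ 2) * (1 - z ^ 2) ^ 3)) ∧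
    (⨆ z : ball (0 : ℂ) 1,
        (1 - ‖(z : ℂ)‖ ^ 2) ^ 3 * ‖projSchwarzian f z‖)
      = 8 * Real.sqrt 3 / 9 :=
  projSchwarzian_of_special_schwarzian_general f hS
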